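/- If f : M^n → Q^{n+1}_ε × ℝ is a biconservative isometric immersion with nonzero parallel mean curvature vector field, then the kernel distribution E_0(H) = {X ∈ TM : A_H X = 0} is involutive. -/

import Mathlib

open scoped BigOperators

/-! Abstract model of an isometric immersion `f : M^m → Q^n_ε × ℝ ⊂ E^{n+2}`,
where `Q^n_ε` is the unit sphere (`ε = 1`) or hyperbolic space (`ε = -1`) and
`E^{n+2}` is Euclidean or Lorentzian space.  Here `R` plays the role of the ring
of smooth functions on `M`, `TM` of the tangent vector fields of `M`, `NM` of
the normal vector fields along `f` (normal inside `T(Q^n_ε × ℝ)`), and `AM` of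
the vector fields along `f` with values in `E^{n+2}`. -/

/-- The curvature tensor of the product `Q^n_ε × ℝ`:
`R̃(Z,W)V = ε (⟨W',V'⟩ Z' - ⟨Z',V'⟩ W')`, where `Z' = Z - ⟨Z,∂t⟩ ∂t` is the
component of `Z` tangent to the `Q^n_ε`-factor. -/
def prodCurv {R AM : Type*} [CommRing R] [Algebra ℝ R] [AddCommGroup AM] [Module R AM]
    (ε : ℝ) (g : AM →ₗ[R] AM →ₗ[R] R) (dt : AM) (Z W V : AM) : AM :=
  algebraMap ℝ R ε •
    ((g W V - g W dt * g V dt) • (Z - g Z dt • dt)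
      - (g Z V - g Z dt * g V dt) • (W - g W dt • dt))

structure Setup (ε : ℝ) (m : ℕ) (R : Type*) [CommRing R] [Algebra ℝ R]
    (TM NM AM : Type*) [AddCommGroup TM] [Module R TM]
    [AddCommGroup NM] [Module R NM] [AddCommGroup AM] [Module R AM] : Type _ where
  /-- the differential of `f` -/
  ι : TM →ₗ[R] AM
  /-- the inclusion of the normal bundle -/
  ν : NM →ₗ[R] AM
  /-- tangential projection -/
  tanPr : AM →ₗ[R] TM
  /-- normal projection -/
  norPr : AM →ₗ[R] NM
  split : ∀ Z, ι (tanPr Z) + ν (norPr Z) = Z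
  tan_ι : ∀ X, tanPr (ι X) = X
  nor_ν : ∀ ξ, norPr (ν ξ) = ξ
  nor_ι : ∀ X, norPr (ι X) = 0
  tan_ν : ∀ ξ, tanPr (ν ξ) = 0
  /-- the (possibly Lorentzian) metric of `E^{n+2}` along `f` -/
  g : AM →ₗ[R] AM →ₗ[R] R
  g_symm : ∀ Z W, g Z W = g W Z
  g_tan_nor : ∀ X ξ, g (ι X) (ν ξ) = 0
  /-- the action of a tangent vector field on a function -/
  act : TM → R → R
  act_add : ∀ X a b, act X (a + b) = act X a + act X b
  act_mul : ∀ X a b, act X (a * b) = a * act X b + b * act X a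
  act_const : ∀ X (r : ℝ), act X (algebraMap ℝ R r) = 0
  /-- the Lie bracket of vector fields on `M` -/
  bracket : TM → TM → TM
  /-- the Levi-Civita connection of `Q^n_ε × ℝ` along `f` -/
  D : TM → AM → AM
  D_add : ∀ X Z W, D X (Z + W) = D X Z + D X W
  D_smul : ∀ X (a : R) Z, D X (a • Z) = act X a • Z + a • D X Z
  /-- the Levi-Civita connection of `M` -/
  conn : TM → TM → TM
  conn_add : ∀ X Y Z, conn X (Y + Z) = conn X Y + conn X Z
  conn_smul : ∀ X (a : R) Y, conn X (a • Y) = act X a • Y + a • conn X Y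
  /-- the normal connection `∇^⊥` -/
  nconn : TM → NM → NM
  nconn_add : ∀ X ξ ζ, nconn X (ξ + ζ) = nconn X ξ + nconn X ζ
  nconn_smul : ∀ X (a : R) ξ, nconn X (a • ξ) = act X a • ξ + a • nconn X ξ
  /-- the second fundamental form `α_f` -/
  alpha : TM →ₗ[R] TM →ₗ[R] NM
  alpha_symm : ∀ X Y, alpha X Y = alpha Y X
  /-- the shape operators `A_ξ` -/
  A : NM →ₗ[R] TM →ₗ[R] TM
  shape : ∀ ξ X Y, g (ι (A ξ X)) (ι Y) = g (ν (alpha X Y)) (ν ξ)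
  /-- the Gauss formula -/
  gauss : ∀ X Y, D X (ι Y) = ι (conn X Y) + ν (alpha X Y)
  /-- the Weingarten formula -/
  weingarten : ∀ X ξ, D X (ν ξ) = - ι (A ξ X) + ν (nconn X ξ)
  metric : ∀ X Z W, act X (g Z W) = g (D X Z) W + g Z (D X W)
  torsion : ∀ X Y, conn X Y - conn Y X = bracket X Y
  /-- the Codazzi equation in `Q^n_ε × ℝ` -/
  codazzi : ∀ X Y Z,
    (nconn X (alpha Y Z) - alpha (conn X Y) Z - alpha Y (conn X Z))
      - (nconn Y (alpha X Z) - alpha (conn Y X) Z - alpha X (conn Y Z))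
      = norPr (prodCurv ε g dt (ι X) (ι Y) (ι Z))
  /-- the Ricci equation in `Q^n_ε × ℝ` -/
  ricci : ∀ X Y ξ,
    nconn X (nconn Y ξ) - nconn Y (nconn X ξ) - nconn (bracket X Y) ξ
      = norPr (prodCurv ε g dt (ι X) (ι Y) (ν ξ))
        + alpha X (A ξ Y) - alpha (A ξ X) Y
  /-- the unit vector field tangent to the `ℝ`-factor -/
  dt : AM
  dt_parallel : ∀ X, D X dt = 0
  dt_unit : g dt dt = 1
  /-- the position vector field, i.e. `f` itself, regarded in `E^{n+2}` -/
  pos : AM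
  /-- the flat connection `∇̂` of `E^{n+2}` along `f` -/
  Dhat : TM → AM → AM
  Dhat_add : ∀ X Z W, Dhat X (Z + W) = Dhat X Z + Dhat X W
  Dhat_smul : ∀ X (a : R) Z, Dhat X (a • Z) = act X a • Z + a • Dhat X Z
  Dhat_pos : ∀ X, Dhat X pos = ι X
  Dhat_dt : ∀ X, Dhat X dt = 0
  Dhat_metric : ∀ X Z W, act X (g Z W) = g (Dhat X Z) W + g Z (Dhat X W)
  /-- relation between `∇̂` and the connection of `Q^n_ε × ℝ` via the second
  fundamental form of the inclusion `Q^n_ε × ℝ ⊂ E^{n+2}` -/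
  Dhat_ι : ∀ X Y, Dhat X (ι Y) = D X (ι Y)
    - (algebraMap ℝ R ε * (g (ι X) (ι Y) - g (ι X) dt * g (ι Y) dt)) •
        (pos - g pos dt • dt)
  Dhat_ν : ∀ X ξ, Dhat X (ν ξ) = D X (ν ξ)
    - (algebraMap ℝ R ε * (g (ι X) (ν ξ) - g (ι X) dt * g (ν ξ) dt)) •
        (pos - g pos dt • dt)
  /-- `f` takes values in `Q^n_ε × ℝ` -/
  pos_norm : g (pos - g pos dt • dt) (pos - g pos dt • dt) = algebraMap ℝ R ε

namespace Setup

variable {ε : ℝ} {m : ℕ} {R TM NM AM : Type*} [CommRing R] [Algebra ℝ R]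
  [AddCommGroup TM] [Module R TM] [AddCommGroup NM] [Module R NM]
  [AddCommGroup AM] [Module R AM]

variable (S : Setup ε m R TM NM AM)

/-- the tangent part `T` of `∂t`, so that `∂t = f_* T + η` -/
def T : TM := S.tanPr S.dt

/-- the normal part `η` of `∂t`, so that `∂t = f_* T + η` -/
def eta : NM := S.norPr S.dt

/-- the induced metric on `M` -/
def gT (X Y : TM) : R := S.g (S.ι X) (S.ι Y)

/-- the metric of the normal bundle -/
def gN (ξ ζ : NM) : R := S.g (S.ν ξ) (S.ν ζ)

/-- the curvature tensor `R̃` of `Q^n_ε × ℝ` along `f` -/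
def Rcurv (Z W V : AM) : AM := prodCurv ε S.g S.dt Z W V

/-- `e` is a (local) orthonormal tangent frame of `M` -/
def IsONFrame (e : Fin m → TM) : Prop :=
  (∀ i j, S.gT (e i) (e j) = if i = j then 1 else 0) ∧
  (∀ X : TM, X = ∑ i, S.gT X (e i) • e i)

/-- `H` is the mean curvature vector field: `m H = trace α_f` -/
def IsMeanCurv (e : Fin m → TM) (H : NM) : Prop :=
  (m : R) • H = ∑ i, S.alpha (e i) (e i)

/-- `H` is parallel in the normal bundle -/
def IsParallelN (H : NM) : Prop := ∀ X, S.nconn X H = 0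

/-- `f` is biconservative: the tangent part of the bitension field vanishes,
i.e. `m grad‖H‖² + 4 trace A_{∇^⊥H} + 4 trace (R̃(·,H)·)^T = 0` (paired with an
arbitrary tangent field `Y`, which expresses the gradient term weakly). -/
def Biconservative (e : Fin m → TM) (H : NM) : Prop :=
  ∀ Y : TM,
    (m : R) * S.act Y (S.gN H H)
      + 4 * (∑ i, S.gT (S.A (S.nconn (e i) H) (e i)) Y)
      + 4 * (∑ i, S.gT (S.tanPr (S.Rcurv (S.ι (e i)) (S.ν H) (S.ι (e i)))) Y) = 0

/-- the normal part of the bitension field vanishes: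
`trace α_f(A_H ·, ·) - Δ^⊥ H + 2 trace (R̃(·,H)·)^⊥ = 0` -/
def NormalBitensionZero (e : Fin m → TM) (H : NM) : Prop :=
  (∑ i, S.alpha (S.A H (e i)) (e i))
    - (∑ i, (S.nconn (e i) (S.nconn (e i) H) - S.nconn (S.conn (e i) (e i)) H))
    + 2 • (∑ i, S.norPr (S.Rcurv (S.ι (e i)) (S.ν H) (S.ι (e i)))) = 0

/-- `f` is biharmonic: the full bitension field vanishes. -/
def Biharmonic (e : Fin m → TM) (H : NM) : Prop :=
  S.Biconservative e H ∧ S.NormalBitensionZero e H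

/-- a vector field is nowhere vanishing (in the function-ring model: it is not
annihilated by any nonzero function) -/
def NowhereZero (_S₀ : Setup ε m R TM NM AM) (X : TM) : Prop :=
  ∀ a : R, a • X = 0 → a = 0

/-- a normal field is nowhere vanishing -/
def NowhereZeroN (_S₀ : Setup ε m R TM NM AM) (ξ : NM) : Prop :=
  ∀ a : R, a • ξ = 0 → a = 0

/-- `f` belongs to the class `𝒜`: `T` is an eigenvector of every shape
operator of `f` -/
def ClassA : Prop := ∀ ξ : NM, ∃ r : R, S.A ξ S.T = r • S.T

end Setup

/-- The symmetric bilinear form of `E⁶` (Euclidean for `ε = 1`, Lorentzian for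
`ε = -1`), the last coordinate corresponding to the `ℝ`-factor of `Q⁴_ε × ℝ`. -/
def bform (ε : ℝ) (v w : Fin 6 → ℝ) : ℝ :=
  v 0 * w 0 + v 1 * w 1 + v 2 * w 2 + v 3 * w 3 + ε * (v 4 * w 4) + v 5 * w 5

/-! Pair the Codazzi equation for `α([X,Y], Z)` with the parallel field `H`: for
`X, Y ∈ ker A_H` only the ambient curvature survives, giving
`⟨A_H [X,Y], Z⟩ = ε ⟨η,H⟩ (⟨Y,Z⟩⟨X,T⟩ - ⟨X,Z⟩⟨Y,T⟩)`. For parallel `H` the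
biconservativity equation reduces to the trace of the ambient curvature,
`4 ε (n-1) ⟨η,H⟩ T = 0`, so this vanishes as soon as `n ≥ 2`; for `n ≤ 1` it
vanishes because all tangent vectors are proportional. -/

namespace Setup

variable {ε : ℝ} {m : ℕ} {R TM NM AM : Type*} [CommRing R] [Algebra ℝ R]
  [AddCommGroup TM] [Module R TM] [AddCommGroup NM] [Module R NM]
  [AddCommGroup AM] [Module R AM]
  (S : Setup ε m R TM NM AM)

lemma act_zero (X : TM) : S.act X 0 = 0 := by
  simpa using S.act_const X 0

lemma g_nor_tan (ξ : NM) (X : TM) : S.g (S.ν ξ) (S.ι X) = 0 := by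
  rw [S.g_symm]; exact S.g_tan_nor X ξ

lemma g_ι_dt (X : TM) : S.g (S.ι X) S.dt = S.gT X S.T := by
  conv_lhs => rw [← S.split S.dt]
  simp [Setup.gT, Setup.T, S.g_tan_nor]

lemma g_ν_dt (ξ : NM) : S.g (S.ν ξ) S.dt = S.gN ξ S.eta := by
  conv_lhs => rw [← S.split S.dt]
  simp [Setup.gN, Setup.eta, S.g_nor_tan]

lemma gT_symm (X Y : TM) : S.gT X Y = S.gT Y X := S.g_symm _ _

lemma gN_symm (ξ ζ : NM) : S.gN ξ ζ = S.gN ζ ξ := S.g_symm _ _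

@[simp] lemma gT_zero_left (Z : TM) : S.gT 0 Z = 0 := by simp [Setup.gT]

@[simp] lemma gN_zero_left (ζ : NM) : S.gN 0 ζ = 0 := by simp [Setup.gN]

lemma gT_sub_left (X Y Z : TM) : S.gT (X - Y) Z = S.gT X Z - S.gT Y Z := by
  simp [Setup.gT]

lemma gT_smul_left (a : R) (X Z : TM) : S.gT (a • X) Z = a * S.gT X Z := by
  simp [Setup.gT]

lemma gN_sub_left (ξ ζ η : NM) : S.gN (ξ - ζ) η = S.gN ξ η - S.gN ζ η := by
  simp [Setup.gN]

lemma gN_smul_left (a : R) (ξ η : NM) : S.gN (a • ξ) η = a * S.gN ξ η := by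
  simp [Setup.gN]

lemma act_gN (X : TM) (ξ ζ : NM) :
    S.act X (S.gN ξ ζ) = S.gN (S.nconn X ξ) ζ + S.gN ξ (S.nconn X ζ) := by
  have h := S.metric X (S.ν ξ) (S.ν ζ)
  rw [S.weingarten, S.weingarten] at h
  simpa [Setup.gN, S.g_tan_nor, S.g_nor_tan] using h

lemma gN_alpha (ξ : NM) (X Y : TM) : S.gN (S.alpha X Y) ξ = S.gT (S.A ξ X) Y :=
  (S.shape ξ X Y).symm

lemma norPr_prodCurv_ι_ι_ι (X Y Z : TM) :
    S.norPr (prodCurv ε S.g S.dt (S.ι X) (S.ι Y) (S.ι Z))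
      = (algebraMap ℝ R ε * (S.gT X Z * S.gT Y S.T - S.gT Y Z * S.gT X S.T)) • S.eta := by
  unfold prodCurv
  simp only [map_smul, map_sub, S.nor_ι, S.g_ι_dt]
  rw [← Setup.eta, ← Setup.gT, ← Setup.gT]
  module

lemma tanPr_prodCurv_ι_ν_ι (X Z : TM) (ξ : NM) :
    S.tanPr (prodCurv ε S.g S.dt (S.ι X) (S.ν ξ) (S.ι Z))
      = (algebraMap ℝ R ε * (S.gN ξ S.eta * S.gT X Z)) • S.T
        - (algebraMap ℝ R ε * (S.gN ξ S.eta * S.gT Z S.T)) • X := by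
  unfold prodCurv
  simp only [map_smul, map_sub, S.tan_ι, S.tan_ν, S.g_ι_dt, S.g_ν_dt, S.g_nor_tan]
  rw [← Setup.T, ← Setup.gT]
  module

variable {S}

lemma IsParallelN.act_gN {H : NM} (hpar : S.IsParallelN H) (X : TM) (ξ : NM) :
    S.act X (S.gN ξ H) = S.gN (S.nconn X ξ) H := by
  rw [S.act_gN, hpar X]
  simp [Setup.gN]

lemma IsParallelN.gT_A_bracket {H : NM} (hpar : S.IsParallelN H) {X Y : TM}
    (hX : S.A H X = 0) (hY : S.A H Y = 0) (Z : TM) :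
    S.gT (S.A H (S.bracket X Y)) Z
      = algebraMap ℝ R ε * S.gN S.eta H * (S.gT Y Z * S.gT X S.T - S.gT X Z * S.gT Y S.T) := by
  have hα : S.alpha (S.bracket X Y) Z
      = (S.nconn X (S.alpha Y Z) - S.alpha Y (S.conn X Z))
        - (S.nconn Y (S.alpha X Z) - S.alpha X (S.conn Y Z))
        - S.norPr (prodCurv ε S.g S.dt (S.ι X) (S.ι Y) (S.ι Z)) := by
    rw [← S.torsion, map_sub, LinearMap.sub_apply, ← S.codazzi]
    abel
  rw [← S.gN_alpha, hα, S.norPr_prodCurv_ι_ι_ι]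
  simp only [gN_sub_left, gN_smul_left, ← hpar.act_gN, gN_alpha, hX, hY, gT_zero_left,
    act_zero]
  ring

lemma IsONFrame.eq_zero_of_forall_gT_eq_zero {e : Fin m → TM} (he : S.IsONFrame e)
    {X : TM} (hX : ∀ Z, S.gT X Z = 0) : X = 0 := by
  rw [he.2 X]
  simp [hX]

lemma IsONFrame.sum_gT_mul_gT {e : Fin m → TM} (he : S.IsONFrame e) (X Z : TM) :
    ∑ i, S.gT X (e i) * S.gT (e i) Z = S.gT X Z := by
  conv_rhs => rw [he.2 X]
  simp [Setup.gT]

lemma IsONFrame.gT_mul_gT_comm_of_le_one {e : Fin m → TM} (he : S.IsONFrame e)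
    (hm : m ≤ 1) (X Y Z W : TM) :
    S.gT X Z * S.gT Y W = S.gT Y Z * S.gT X W := by
  rw [← he.sum_gT_mul_gT X Z, ← he.sum_gT_mul_gT Y W, ← he.sum_gT_mul_gT Y Z,
    ← he.sum_gT_mul_gT X W]
  interval_cases m
  · simp
  · simp only [Fin.sum_univ_one]
    ring

lemma IsONFrame.sum_gT_tanPr_Rcurv {e : Fin m → TM} (he : S.IsONFrame e) (ξ : NM) (W : TM) :
    ∑ i, S.gT (S.tanPr (S.Rcurv (S.ι (e i)) (S.ν ξ) (S.ι (e i)))) W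
      = algebraMap ℝ R ε * ((m : R) - 1) * (S.gN ξ S.eta * S.gT S.T W) := by
  set c := algebraMap ℝ R ε * S.gN ξ S.eta
  have hterm : ∀ i, S.gT (S.tanPr (S.Rcurv (S.ι (e i)) (S.ν ξ) (S.ι (e i)))) W
      = c * S.gT S.T W - c * (S.gT S.T (e i) * S.gT (e i) W) := by
    intro i
    have hunit : S.gT (e i) (e i) = 1 := by simpa using he.1 i i
    rw [Setup.Rcurv, S.tanPr_prodCurv_ι_ν_ι, S.gT_sub_left, S.gT_smul_left, S.gT_smul_left,
      hunit, S.gT_symm S.T (e i)]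
    simp only [c]
    ring
  simp only [Finset.sum_congr rfl fun i _ => hterm i, Finset.sum_sub_distrib, ← Finset.mul_sum,
    he.sum_gT_mul_gT, Finset.sum_const, Finset.card_univ, Fintype.card_fin, nsmul_eq_mul, c]
  ring

lemma Biconservative.eps_mul_gN_eta_mul_gT_T_eq_zero {e : Fin m → TM} {H : NM}
    (hbic : S.Biconservative e H) (he : S.IsONFrame e) (hpar : S.IsParallelN H)
    (hm : 2 ≤ m) (W : TM) :
    algebraMap ℝ R ε * S.gN S.eta H * S.gT W S.T = 0 := by
  have hb := hbic W
  simp only [hpar.act_gN, hpar _, map_zero, LinearMap.zero_apply, gT_zero_left, gN_zero_left,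
    Finset.sum_const_zero, he.sum_gT_tanPr_Rcurv] at hb
  have hpos : (0 : ℝ) < 4 * (m - 1) := by
    have : (2 : ℝ) ≤ m := by exact_mod_cast hm
    linarith
  have hunit : IsUnit (algebraMap ℝ R (4 * (m - 1))) := (isUnit_iff_ne_zero.mpr hpos.ne').map _
  refine hunit.mul_right_eq_zero.mp ?_
  rw [map_mul, map_sub, map_ofNat, map_natCast, map_one, S.gN_symm, S.gT_symm]
  linear_combination hb

end Setup

theorem stmt_11_general {ε : ℝ} {n : ℕ} {R TM NM AM : Type*}
    [CommRing R] [Algebra ℝ R] [AddCommGroup TM] [Module R TM]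
    [AddCommGroup NM] [Module R NM] [AddCommGroup AM] [Module R AM]
    (S : Setup ε n R TM NM AM)
    (e : Fin n → TM) (H : NM) (he : S.IsONFrame e)
    (hpar : S.IsParallelN H)
    (hbic : S.Biconservative e H) :
    ∀ X Y : TM, S.A H X = 0 → S.A H Y = 0 → S.A H (S.bracket X Y) = 0 := by
  intro X Y hX hY
  refine he.eq_zero_of_forall_gT_eq_zero fun Z => ?_
  rw [hpar.gT_A_bracket hX hY]
  rcases le_or_gt n 1 with hn | hn
  · rw [he.gT_mul_gT_comm_of_le_one hn Y X Z S.T, sub_self, mul_zero]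
  · have hT := hbic.eps_mul_gN_eta_mul_gT_T_eq_zero he hpar hn
    linear_combination S.gT Y Z * hT X - S.gT X Z * hT Y

/-- For a biconservative isometric immersion `f : M^n → Q^{n+1}_ε × ℝ` with
nonzero parallel mean curvature, the distribution `E_0(H) = ker A_H` is
involutive. -/
theorem stmt_11 {ε : ℝ} (hε : ε = 1 ∨ ε = -1) {n : ℕ} {R TM NM AM : Type*}
    [CommRing R] [Algebra ℝ R] [AddCommGroup TM] [Module R TM]
    [AddCommGroup NM] [Module R NM] [AddCommGroup AM] [Module R AM]
    (S : Setup ε n R TM NM AM)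
    (e : Fin n → TM) (H : NM) (he : S.IsONFrame e) (hH : S.IsMeanCurv e H)
    (hpar : S.IsParallelN H) (hH0 : H ≠ 0)
    (hbic : S.Biconservative e H)
    (ξ₁ ξ₂ : NM) (nH nE : R) (hu1 : S.gN ξ₁ ξ₁ = 1) (hH1 : H = nH • ξ₁)
    (hu2 : S.gN ξ₂ ξ₂ = 1) (hetadec : S.eta = nE • ξ₂)
    (hspan : ∀ ζ : NM, ∃ r s : R, ζ = r • ξ₁ + s • ξ₂) :
    ∀ X Y : TM, S.A H X = 0 → S.A H Y = 0 → S.A H (S.bracket X Y) = 0 :=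
  stmt_11_general S e H he hpar hbic
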